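/- arXiv:1107.3493 — 7 statements merged into one kernel-verified Lean document; each statement's English description precedes it below -/
import Mathlib

section
/- Let X be a compact Hausdorff topological space, let n be a natural number, and let g_0,…,g_n and g_{n+1} be real-valued continuous functions on X. Suppose there exists (λ_0,…,λ_n) ∈ ℝ^{n+1} such that Σ_{i=0}^n λ_i g_i(x) > 0 for every x ∈ X, and let c = (c_0,…,c_n) ∈ ℝ^{n+1} be such that M_c ≠ ∅. Then there exists a measure μ_max ∈ M_c whose support has cardinality at most n+1 and such that ∫_X g_{n+1} dμ_max ≥ ∫_X g_{n+1} dμ for every μ ∈ M_c. -/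
open MeasureTheory

/-- The support of a Borel measure: the set of points all of whose open
neighborhoods have positive measure. -/
def measSupport {X : Type*} [TopologicalSpace X] [MeasurableSpace X]
    (μ : Measure X) : Set X :=
  {x | ∀ U : Set X, IsOpen U → x ∈ U → 0 < μ U}

/-!
Put `Q x = ((g_i x)_i, g_{n+1} x) ∈ ℝ^{n+1} × ℝ`. For an admissible `μ` the vector
`(c, ∫ g_{n+1} dμ) = ∫ Q dμ` is `μ(X)` times an average of `Q`, so it lies in the convex cone
generated by `Q(X)`. Because `∑ λ_i g_i > 0`, the slice of this cone over `c` is a truncated cone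
over the compact convex hull of `Q(X)`, hence compact, and its top point `(c, t*)` is a
nonnegative combination of finitely many `Q x`. While more than `n + 1` atoms remain, their first
coordinates satisfy a linear relation; maximality of `t*` forces the relation to hold for the
`Q x` themselves, and Carathéodory's elimination removes an atom. The final atoms are `μ_max`.
-/

open Set Finset Module Filter Topology Pointwise

theorem IsCompact.convexHull {E : Type*} [NormedAddCommGroup E] [NormedSpace ℝ E]
    [FiniteDimensional ℝ E] {s : Set E} (hs : IsCompact s) :
    IsCompact (convexHull ℝ s) := by
  let combination (k : ℕ) (p : (Fin k → ℝ) × (Fin k → E)) : E := ∑ i, p.1 i • p.2 i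
  have hcarath : _root_.convexHull ℝ s = ⋃ k ∈ Finset.range (finrank ℝ E + 2),
      combination k '' (stdSimplex ℝ (Fin k) ×ˢ univ.pi fun _ => s) := by
    refine subset_antisymm (fun x hx => ?_) ?_
    · obtain ⟨ι, _, z, w, hzs, hz, hw0, hw1, rfl⟩ := eq_pos_convex_span_of_mem_convexHull hx
      have hcard : Fintype.card ι < finrank ℝ E + 2 := by
        have := Submodule.finrank_le (vectorSpan ℝ (range z))
        have := hz.card_le_finrank_succ
        omega
      let e := (Fintype.equivFin ι).symm
      refine mem_biUnion (Finset.mem_range.2 hcard) ⟨(w ∘ e, z ∘ e), ⟨⟨fun i => (hw0 _).le, ?_⟩,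
        fun i _ => hzs (mem_range_self _)⟩, ?_⟩
      · simpa [← hw1] using e.sum_comp w
      · exact e.sum_comp fun i => w i • z i
    · simp only [iUnion_subset_iff]
      rintro k - _ ⟨⟨w, z⟩, ⟨⟨hw0, hw1⟩, hz⟩, rfl⟩
      exact (convex_convexHull ℝ s).sum_mem (fun i _ => hw0 i) hw1
        fun i _ => subset_convexHull ℝ s (hz i (mem_univ i))
  rw [hcarath]
  exact (Finset.range _).isCompact_biUnion fun k _ =>
    (IsCompact.prod (isCompact_stdSimplex _ _) (isCompact_univ_pi fun _ => hs)).image (by fun_prop)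

namespace PointedCone

variable {X F : Type*} [AddCommGroup F] [Module ℝ F]

theorem mem_hull_range_iff {Q : X → F} {v : F} :
    v ∈ hull ℝ (range Q) ↔
      ∃ (s : Finset X) (a : X → ℝ), (∀ x ∈ s, 0 ≤ a x) ∧ ∑ x ∈ s, a x • Q x = v := by
  constructor
  · intro hv
    obtain ⟨a, rfl⟩ := Finsupp.mem_span_range_iff_exists_finsupp.1 hv
    exact ⟨a.support, fun x => a x, fun x _ => (a x).2, rfl⟩
  · rintro ⟨s, a, ha, rfl⟩
    exact Submodule.sum_mem _ fun x hx => smul_mem _ (ha x hx) (subset_hull (mem_range_self x))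

theorem convexHull_subset_hull (s : Set F) : convexHull ℝ s ⊆ hull ℝ s :=
  convexHull_min subset_hull (PointedCone.convex _)

theorem coe_hull_eq_insert_zero_smul_convexHull (s : Set F) :
    (hull ℝ s : Set F) = insert 0 (Ici (0 : ℝ) • convexHull ℝ s) := by
  refine subset_antisymm (fun v hv => ?_) (insert_subset (zero_mem _) ?_)
  · obtain ⟨a, has, ha, rfl⟩ := mem_hull_set.1 hv
    rcases (Finset.sum_nonneg fun y _ => ha y).eq_or_lt with hsum | hsum
    · refine .inl (Finset.sum_eq_zero fun y hy => ?_)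
      simp [(Finset.sum_eq_zero_iff_of_nonneg fun y _ => ha y).1 hsum.symm y hy]
    · refine .inr ⟨_, hsum.le, _, a.support.centerMass_mem_convexHull (fun y _ => ha y) hsum
        (fun y hy => has hy), ?_⟩
      exact smul_inv_smul₀ hsum.ne' _
  · rintro _ ⟨r, hr, k, hk, rfl⟩
    exact smul_mem _ hr (convexHull_subset_hull s hk)

theorem isCompact_hull_inter_preimage_singleton {F : Type*} [NormedAddCommGroup F]
    [NormedSpace ℝ F] [FiniteDimensional ℝ F] {s : Set F} (hs : IsCompact s) (Λ : F →ₗ[ℝ] ℝ)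
    {ε : ℝ} (hε : 0 < ε) (hΛ : ∀ y ∈ s, ε ≤ Λ y) (L : ℝ) :
    IsCompact ((hull ℝ s : Set F) ∩ Λ ⁻¹' {L}) := by
  have hΛK : ∀ k ∈ convexHull ℝ s, ε ≤ Λ k :=
    fun k hk => convexHull_min hΛ (convex_halfSpace_ge Λ.isLinear ε) hk
  have hbounded : (hull ℝ s : Set F) ∩ Λ ⁻¹' {L} =
      insert 0 (Icc 0 (L / ε) • convexHull ℝ s) ∩ Λ ⁻¹' {L} := by
    rw [coe_hull_eq_insert_zero_smul_convexHull]
    refine subset_antisymm (fun v ⟨hv, hL⟩ => ⟨?_, hL⟩) (inter_subset_inter_left _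
      (insert_subset_insert (smul_subset_smul_right Icc_subset_Ici_self)))
    obtain rfl | ⟨r, hr, k, hk, rfl⟩ := hv
    · exact mem_insert _ _
    · refine .inr ⟨r, ⟨hr, ?_⟩, k, hk, rfl⟩
      rw [le_div_iff₀ hε, ← mem_singleton_iff.1 hL, map_smul, smul_eq_mul]
      exact mul_le_mul_of_nonneg_left (hΛK k hk) hr
  rw [hbounded]
  exact ((isCompact_Icc.smul_set hs.convexHull).insert 0).inter_right
    (isClosed_singleton.preimage Λ.continuous_of_finiteDimensional)

theorem isCompact_setOf_mk_mem_hull {E : Type*} [NormedAddCommGroup E] [NormedSpace ℝ E]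
    [FiniteDimensional ℝ E] {s : Set (E × ℝ)} (hs : IsCompact s) (Λ : E →ₗ[ℝ] ℝ)
    (hΛ : ∀ y ∈ s, 0 < Λ y.1) (c : E) :
    IsCompact {t | (c, t) ∈ hull ℝ s} := by
  obtain ⟨ε, hε, hεΛ⟩ :=
    hs.exists_forall_le' (Λ.continuous_of_finiteDimensional.comp continuous_fst).continuousOn hΛ
  have hslice := (isCompact_hull_inter_preimage_singleton hs (Λ ∘ₗ LinearMap.fst ℝ E ℝ) hε hεΛ
    (Λ c)).inter_right ((isClosed_singleton (x := c)).preimage continuous_fst)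
  convert hslice.image continuous_snd using 1
  ext t
  simp

end PointedCone

section Reduction

variable {X M : Type*} [AddCommGroup M] [Module ℝ M]

theorem Finset.sum_add_mul_smul (s : Finset X) (a u : X → ℝ) (σ : ℝ) (Q : X → M) :
    ∑ x ∈ s, (a x + σ * u x) • Q x = ∑ x ∈ s, a x • Q x + σ • ∑ x ∈ s, u x • Q x := by
  simp only [add_smul, mul_smul, Finset.sum_add_distrib, Finset.smul_sum]

theorem exists_sum_erase_smul_eq [DecidableEq X] {Q : X → M} {s : Finset X} {a u : X → ℝ}
    (ha : ∀ x ∈ s, 0 ≤ a x) (hu : ∑ x ∈ s, u x • Q x = 0) {x₁ : X} (hx₁ : x₁ ∈ s)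
    (hux₁ : u x₁ ≠ 0) :
    ∃ x₀ ∈ s, ∃ b : X → ℝ, (∀ x ∈ s, 0 ≤ b x) ∧
      ∑ x ∈ s.erase x₀, b x • Q x = ∑ x ∈ s, a x • Q x := by
  wlog hneg : u x₁ < 0 generalizing u
  · refine this (u := -u) ?_ (neg_ne_zero.2 hux₁)
      (neg_neg_of_pos (hux₁.lt_of_le' (not_lt.1 hneg)))
    simp only [Pi.neg_apply, neg_smul, Finset.sum_neg_distrib, hu, neg_zero]
  obtain ⟨x₀, hx₀, hmin⟩ := (s.filter (u · < 0)).exists_min_image (fun x => a x / -u x)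
    ⟨x₁, Finset.mem_filter.2 ⟨hx₁, hneg⟩⟩
  rw [Finset.mem_filter] at hx₀
  -- the largest step along `u` that keeps every coefficient nonnegative
  set σ := a x₀ / -u x₀
  have hσ : 0 ≤ σ := div_nonneg (ha x₀ hx₀.1) (neg_nonneg.2 hx₀.2.le)
  refine ⟨x₀, hx₀.1, fun x => a x + σ * u x, fun x hx => ?_, ?_⟩
  · rcases lt_or_ge (u x) 0 with hux | hux
    · have := hmin x (Finset.mem_filter.2 ⟨hx, hux⟩)
      rw [le_div_iff₀ (neg_pos.2 hux)] at this
      linarith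
    · exact add_nonneg (ha x hx) (mul_nonneg hσ hux)
  · have hx₀zero : a x₀ + σ * u x₀ = 0 := by
      simp only [σ, div_neg, neg_mul, div_mul_cancel₀ _ hx₀.2.ne, add_neg_cancel]
    rw [Finset.sum_erase _ (by simp only [hx₀zero, zero_smul]), Finset.sum_add_mul_smul, hu,
      smul_zero, add_zero]

variable {E : Type*} [AddCommGroup E] [Module ℝ E]

theorem snd_sum_smul_eq_zero_of_isMax {Q : X → E × ℝ} {s : Finset X} {a u : X → ℝ}
    (ha : ∀ x ∈ s, 0 < a x)
    (hmax : ∀ b : X → ℝ, (∀ x ∈ s, 0 ≤ b x) →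
      (∑ x ∈ s, b x • Q x).1 = (∑ x ∈ s, a x • Q x).1 →
      (∑ x ∈ s, b x • Q x).2 ≤ (∑ x ∈ s, a x • Q x).2)
    (hu : (∑ x ∈ s, u x • Q x).1 = 0) :
    (∑ x ∈ s, u x • Q x).2 = 0 := by
  have hnonneg : ∀ᶠ σ in 𝓝 (0 : ℝ), ∀ x ∈ s, 0 ≤ a x + σ * u x :=
    (Finset.eventually_all s).2 fun x hx => (ContinuousAt.eventually_lt continuousAt_const
      (by fun_prop) (by simpa using ha x hx)).mono fun _ => le_of_lt
  have hlocal : IsLocalMax (fun σ => (∑ x ∈ s, a x • Q x).2 + σ * (∑ x ∈ s, u x • Q x).2) 0 := by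
    filter_upwards [hnonneg] with σ hσ
    have hfst := congrArg Prod.fst (Finset.sum_add_mul_smul s a u σ Q)
    have hsnd := congrArg Prod.snd (Finset.sum_add_mul_smul s a u σ Q)
    simp only [Prod.fst_add, Prod.smul_fst, hu, smul_zero, add_zero] at hfst
    simp only [Prod.snd_add, Prod.smul_snd, smul_eq_mul] at hsnd
    simpa [← hsnd] using hmax _ hσ hfst
  simpa using hlocal.hasDerivAt_eq_zero (((hasDerivAt_id 0).mul_const _).const_add _)

variable [FiniteDimensional ℝ E] [DecidableEq X]

theorem exists_sum_smul_eq_card_le_finrank {Q : X → E × ℝ} {v : E × ℝ}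
    (hmax : ∀ (s : Finset X) (a : X → ℝ), (∀ x ∈ s, 0 ≤ a x) →
      (∑ x ∈ s, a x • Q x).1 = v.1 → (∑ x ∈ s, a x • Q x).2 ≤ v.2)
    (s : Finset X) (a : X → ℝ) (ha : ∀ x ∈ s, 0 ≤ a x) (hv : ∑ x ∈ s, a x • Q x = v) :
    ∃ (t : Finset X) (b : X → ℝ), #t ≤ finrank ℝ E ∧ (∀ x ∈ t, 0 ≤ b x) ∧
      ∑ x ∈ t, b x • Q x = v := by
  induction s using Finset.strongInduction generalizing a with
  | H s ih =>
  by_cases hcard : #s ≤ finrank ℝ E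
  · exact ⟨s, a, hcard, ha, hv⟩
  by_cases hzero : ∃ x ∈ s, a x = 0
  · obtain ⟨x, hx, hax⟩ := hzero
    refine ih _ (Finset.erase_ssubset hx) a (fun y hy => ha y (Finset.mem_of_mem_erase hy)) ?_
    rw [Finset.sum_erase _ (by rw [hax, zero_smul]), hv]
  push Not at hzero
  have hpos : ∀ x ∈ s, 0 < a x := fun x hx => (ha x hx).lt_of_ne' (hzero x hx)
  obtain ⟨u, hu, x₁, hx₁, hux₁⟩ := not_linearIndepOn_finset_iff.1
    fun hli : LinearIndepOn ℝ (fun x => (Q x).1) (s : Set X) =>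
      hcard (by simpa using hli.fintype_card_le_finrank)
  have hufst : (∑ x ∈ s, u x • Q x).1 = 0 := by simpa [Prod.fst_sum] using hu
  have hrel : ∑ x ∈ s, u x • Q x = 0 := Prod.ext hufst <|
    snd_sum_smul_eq_zero_of_isMax hpos (fun b hb hb₁ => hv ▸ hmax s b hb (hv ▸ hb₁)) hufst
  obtain ⟨x₀, hx₀, b, hb, hbsum⟩ := exists_sum_erase_smul_eq ha hrel hx₁ hux₁
  exact ih _ (Finset.erase_ssubset hx₀) b (fun x hx => hb x (Finset.mem_of_mem_erase hx))
    (hbsum.trans hv)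

end Reduction

section Measures

variable {X : Type*} [TopologicalSpace X] [MeasurableSpace X]

theorem isFiniteMeasure_of_integrable_of_pos [CompactSpace X] {μ : Measure X} {h : X → ℝ}
    (hh : Continuous h) (hpos : ∀ x, 0 < h x) (hint : Integrable h μ) : IsFiniteMeasure μ := by
  obtain ⟨ε, hε, hεh⟩ := isCompact_univ.exists_forall_le' hh.continuousOn fun x _ => hpos x
  exact ⟨by simpa [hεh] using hint.measure_ge_lt_top hε⟩

theorem Continuous.integrable_of_compactSpace [CompactSpace X] [OpensMeasurableSpace X]
    {E : Type*} [NormedAddCommGroup E] {f : X → E} (hf : Continuous f) (μ : Measure X)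
    [IsFiniteMeasure μ] : Integrable f μ :=
  hf.integrable_of_hasCompactSupport (HasCompactSupport.of_compactSpace f)

theorem integral_mem_hull_range [CompactSpace X] [OpensMeasurableSpace X] {F : Type*}
    [NormedAddCommGroup F] [NormedSpace ℝ F] [FiniteDimensional ℝ F] {Q : X → F}
    (hQ : Continuous Q) (μ : Measure X) [IsFiniteMeasure μ] :
    ∫ x, Q x ∂μ ∈ PointedCone.hull ℝ (range Q) := by
  rcases eq_zero_or_neZero μ with rfl | _
  · simp [zero_mem]
  have haverage : ⨍ x, Q x ∂μ ∈ convexHull ℝ (range Q) :=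
    (convex_convexHull ℝ _).average_mem (isCompact_range hQ).convexHull.isClosed
      (ae_of_all _ fun x => subset_convexHull ℝ _ (mem_range_self x))
      (hQ.integrable_of_compactSpace μ)
  rw [← measure_smul_average]
  exact PointedCone.smul_mem _ measureReal_nonneg (PointedCone.convexHull_subset_hull _ haverage)

theorem mk_integral_mem_hull_range [CompactSpace X] [OpensMeasurableSpace X] {ι : Type*}
    [Fintype ι] {g : ι → X → ℝ} {f : X → ℝ} (hg : ∀ i, Continuous (g i)) (hf : Continuous f)
    (μ : Measure X) [IsFiniteMeasure μ] :
    ((fun i => ∫ x, g i x ∂μ), ∫ x, f x ∂μ) ∈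
      PointedCone.hull ℝ (range fun x => ((fun i => g i x), f x)) := by
  have hint : ∀ i, Integrable (g i) μ := fun i => (hg i).integrable_of_compactSpace μ
  convert integral_mem_hull_range ((continuous_pi hg).prodMk hf) μ using 1
  rw [integral_pair (Integrable.of_eval hint) (hf.integrable_of_compactSpace μ)]
  congr 1
  funext i
  exact (eval_integral hint i).symm

end Measures

section DiracSum

variable {X : Type*} [MeasurableSpace X] {s : Finset X} {a : X → ℝ}

noncomputable def diracSum (s : Finset X) (a : X → ℝ) : Measure X :=
  ∑ x ∈ s, ENNReal.ofReal (a x) • Measure.dirac x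

theorem integrable_diracSum [MeasurableSingletonClass X] (f : X → ℝ) :
    Integrable f (diracSum s a) :=
  integrable_finsetSum_measure.2 fun _ _ =>
    (integrable_dirac (by simp)).smul_measure ENNReal.ofReal_ne_top

theorem integral_diracSum [MeasurableSingletonClass X] (ha : ∀ x ∈ s, 0 ≤ a x) (f : X → ℝ) :
    ∫ x, f x ∂diracSum s a = ∑ x ∈ s, a x * f x := by
  rw [diracSum, integral_finsetSum_measure fun _ _ =>
    (integrable_dirac (by simp)).smul_measure ENNReal.ofReal_ne_top]
  refine Finset.sum_congr rfl fun x hx => ?_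
  rw [integral_smul_measure, integral_dirac, ENNReal.toReal_ofReal (ha x hx), smul_eq_mul]

theorem integral_diracSum_eq_of_sum_smul_eq [MeasurableSingletonClass X] {ι : Type*}
    {g : ι → X → ℝ} {f : X → ℝ} {c : ι → ℝ} {t : ℝ} (ha : ∀ x ∈ s, 0 ≤ a x)
    (hsum : ∑ x ∈ s, a x • ((fun i => g i x), f x) = (c, t)) :
    (∀ i, ∫ x, g i x ∂diracSum s a = c i) ∧ ∫ x, f x ∂diracSum s a = t := by
  simp only [integral_diracSum ha]
  refine ⟨fun i => ?_, ?_⟩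
  · simpa [Prod.fst_sum] using congrFun (congrArg Prod.fst hsum) i
  · simpa [Prod.snd_sum] using congrArg Prod.snd hsum

theorem measSupport_diracSum_subset [TopologicalSpace X] [T1Space X] [OpensMeasurableSpace X] :
    measSupport (diracSum s a) ⊆ s := by
  intro x hx
  by_contra hxs
  have hopen : IsOpen (↑s : Set X)ᶜ := s.finite_toSet.isClosed.isOpen_compl
  refine (hx _ hopen hxs).ne' ?_
  simp +contextual [diracSum, Measure.finsetSum_apply, Measure.dirac_apply' _ hopen.measurableSet]

theorem encard_measSupport_diracSum_le [TopologicalSpace X] [T1Space X]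
    [OpensMeasurableSpace X] : (measSupport (diracSum s a)).encard ≤ #s :=
  (encard_le_encard measSupport_diracSum_subset).trans_eq (encard_coe_eq_coe_finsetCard s)

end DiracSum

/-- Carathéodory principle: if `X` is compact Hausdorff, some polynomial
`∑ λ_i g_i` is strictly positive on `X`, and the moment set `M_c` is nonempty,
then `∫ g_{n+1} dμ` attains its maximum over `M_c` at a measure whose support
has cardinality at most `n + 1`. -/
theorem caratheodory_principle {X : Type*} [TopologicalSpace X] [CompactSpace X]
    [T2Space X] [MeasurableSpace X] [BorelSpace X]
    (n : ℕ) (g : Fin (n + 1) → X → ℝ) (gtop : X → ℝ)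
    (hg : ∀ i, Continuous (g i)) (hgtop : Continuous gtop)
    (lam : Fin (n + 1) → ℝ) (hlam : ∀ x : X, 0 < ∑ i, lam i * g i x)
    (c : Fin (n + 1) → ℝ)
    (hne : ∃ μ : Measure X, (∀ i, Integrable (g i) μ) ∧ ∀ i, ∫ x, g i x ∂μ = c i) :
    ∃ μmax : Measure X,
      ((∀ i, Integrable (g i) μmax) ∧ ∀ i, ∫ x, g i x ∂μmax = c i) ∧
      (measSupport μmax).encard ≤ n + 1 ∧
      ∀ μ : Measure X, ((∀ i, Integrable (g i) μ) ∧ ∀ i, ∫ x, g i x ∂μ = c i) →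
        ∫ x, gtop x ∂μ ≤ ∫ x, gtop x ∂μmax := by
  classical
  set Q : X → (Fin (n + 1) → ℝ) × ℝ := fun x => (fun i => g i x, gtop x)
  let Λ : (Fin (n + 1) → ℝ) →ₗ[ℝ] ℝ := ∑ i, lam i • LinearMap.proj i
  have hΛ : ∀ x, 0 < Λ (Q x).1 := by simpa [Λ] using hlam
  have hfeasible : ∀ μ : Measure X, ((∀ i, Integrable (g i) μ) ∧ ∀ i, ∫ x, g i x ∂μ = c i) →
      (c, ∫ x, gtop x ∂μ) ∈ PointedCone.hull ℝ (range Q) := by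
    rintro μ ⟨hint, hmom⟩
    have := isFiniteMeasure_of_integrable_of_pos (by fun_prop) hlam
      (integrable_finsetSum _ fun i _ => (hint i).const_mul (lam i))
    simpa only [hmom] using mk_integral_mem_hull_range hg hgtop μ
  obtain ⟨μ₀, hμ₀⟩ := hne
  obtain ⟨t, ht, htmax⟩ := (PointedCone.isCompact_setOf_mk_mem_hull
    (isCompact_range ((continuous_pi hg).prodMk hgtop)) Λ (forall_mem_range.2 hΛ)
    c).exists_isGreatest ⟨_, hfeasible μ₀ hμ₀⟩
  obtain ⟨s, a, ha, hsa⟩ := PointedCone.mem_hull_range_iff.1 ht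
  obtain ⟨s', a', hcard, ha', hsa'⟩ := exists_sum_smul_eq_card_le_finrank
    (fun s a ha hc => htmax <| show (c, (∑ x ∈ s, a x • Q x).2) ∈ PointedCone.hull ℝ (range Q)
      from PointedCone.mem_hull_range_iff.2 ⟨s, a, ha, Prod.ext hc rfl⟩)
    s a ha hsa
  obtain ⟨hmoments, hvalue⟩ := integral_diracSum_eq_of_sum_smul_eq ha' hsa'
  refine ⟨diracSum s' a', ⟨fun i => integrable_diracSum _, hmoments⟩,
    encard_measSupport_diracSum_le.trans ?_, fun μ hμ => hvalue ▸ htmax (hfeasible μ hμ)⟩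
  exact_mod_cast (by simpa using hcard : #s' ≤ n + 1)
end

section
/- Let X be a compact Hausdorff topological space of cardinality at least 2, and suppose there exists a T-system (g_0,g_1) of continuous functions on X. Then X is homeomorphic to a subset of the unit circle S^1 ⊆ ℝ². -/
/-!
The map `v x = (g₀ x, g₁ x)` sends distinct points to linearly independent vectors (the
T-system determinant is the determinant of the pair), so it never vanishes and its radial
projection `x ↦ v x / ‖v x‖` onto `S¹` is injective. A continuous injection of a compact space
into a Hausdorff space is an embedding.
-/

open Function

section
variable {X E : Type*} [NormedAddCommGroup E] [NormedSpace ℝ E]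

theorem injective_normalize_of_pairwise_linearIndependent {v : X → E}
    (hv : Pairwise fun x y => LinearIndependent ℝ ![v x, v y]) :
    Injective fun x => ‖v x‖⁻¹ • v x := by
  intro a b hab
  by_contra hne
  have hcoeff := LinearIndependent.pair_iff.1 (hv hne) ‖v a‖⁻¹ (-‖v b‖⁻¹)
    (by rw [neg_smul, ← sub_eq_add_neg, sub_eq_zero]; exact hab)
  exact (hv hne).ne_zero 0 (by simpa using hcoeff.1)

theorem exists_homeomorph_subset_unitSphere [TopologicalSpace X] [CompactSpace X]
    [Nontrivial X] {v : X → E} (hcont : Continuous v)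
    (hv : Pairwise fun x y => LinearIndependent ℝ ![v x, v y]) :
    ∃ Y ⊆ Metric.sphere (0 : E) 1, Nonempty (X ≃ₜ Y) := by
  have hne : ∀ x, v x ≠ 0 := fun x ↦ by
    obtain ⟨y, hyx⟩ := exists_ne x
    exact (hv hyx.symm).ne_zero 0
  have hcont' : Continuous fun x => ‖v x‖⁻¹ • v x :=
    (hcont.norm.inv₀ fun x ↦ norm_ne_zero_iff.2 (hne x)).smul hcont
  refine ⟨Set.range fun x => ‖v x‖⁻¹ • v x, ?_, ⟨?_⟩⟩
  · rintro _ ⟨x, rfl⟩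
    exact mem_sphere_zero_iff_norm.2 (norm_smul_inv_norm (hne x))
  · exact (hcont'.isClosedEmbedding
      (injective_normalize_of_pairwise_linearIndependent hv)).toIsEmbedding.toHomeomorph

end

theorem linearIndependent_of_tsystem {X : Type*} {n : ℕ} (g : Fin n → X → ℝ)
    (hT : ∀ x : Fin n → X, Injective x → (Matrix.of fun i j => g i (x j)).det ≠ 0)
    {x : Fin n → X} (hx : Injective x) :
    LinearIndependent ℝ fun j => WithLp.toLp 2 fun i => g i (x j) := by
  have hcols := Matrix.linearIndependent_cols_iff_isUnit.2
    ((Matrix.of fun i j => g i (x j)).isUnit_iff_isUnit_det.2 (hT x hx).isUnit)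
  exact hcols.map' (WithLp.linearEquiv 2 ℝ (Fin n → ℝ)).symm.toLinearMap
    (LinearEquiv.ker _)

theorem pairwise_linearIndependent_of_tsystem {X : Type*} (g : Fin 2 → X → ℝ)
    (hT : ∀ x : Fin 2 → X, Injective x → (Matrix.of fun i j => g i (x j)).det ≠ 0) :
    Pairwise fun a b => LinearIndependent ℝ
      ![WithLp.toLp 2 fun i => g i a, WithLp.toLp 2 fun i => g i b] := by
  intro a b hab
  convert linearIndependent_of_tsystem g hT (injective_pair_iff_ne.2 hab) using 1
  ext j : 1
  fin_cases j <;> rfl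

theorem tsystem_homeomorph_subset_circle_general {X : Type*} [TopologicalSpace X]
    [CompactSpace X]
    (hcard : (2 : Cardinal) ≤ Cardinal.mk X)
    (g : Fin 2 → X → ℝ) (hg : ∀ i, Continuous (g i))
    (hT : ∀ x : Fin 2 → X, Function.Injective x →
      (Matrix.of fun i j => g i (x j)).det ≠ 0) :
    ∃ Y : Set (EuclideanSpace ℝ (Fin 2)),
      Y ⊆ Metric.sphere (0 : EuclideanSpace ℝ (Fin 2)) 1 ∧ Nonempty (X ≃ₜ Y) := by
  obtain ⟨a, b, hab⟩ := Cardinal.two_le_iff.1 hcard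
  have : Nontrivial X := ⟨a, b, hab⟩
  exact exists_homeomorph_subset_unitSphere
    (v := fun x => WithLp.toLp 2 fun i => g i x)
    ((PiLp.continuous_toLp 2 _).comp (continuous_pi hg))
    (pairwise_linearIndependent_of_tsystem g hT)

/-- If there exists a T-system `(g_0, g_1)` of continuous functions on a
compact Hausdorff space `X` of cardinality at least `2`, then `X` is
homeomorphic to a subset of the unit circle `S¹ ⊆ ℝ²`. -/
theorem tsystem_homeomorph_subset_circle {X : Type*} [TopologicalSpace X]
    [CompactSpace X] [T2Space X]
    (hcard : (2 : Cardinal) ≤ Cardinal.mk X)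
    (g : Fin 2 → X → ℝ) (hg : ∀ i, Continuous (g i))
    (hT : ∀ x : Fin 2 → X, Function.Injective x →
      (Matrix.of fun i j => g i (x j)).det ≠ 0) :
    ∃ Y : Set (EuclideanSpace ℝ (Fin 2)),
      Y ⊆ Metric.sphere (0 : EuclideanSpace ℝ (Fin 2)) 1 ∧ Nonempty (X ≃ₜ Y) :=
  tsystem_homeomorph_subset_circle_general hcard g hg hT
end

section
/- Let a < b be real numbers and let (g_0,…,g_n) be a T-system of continuous functions on [a,b]. Then the determinant det(g_i(x_j))_{i,j=0}^n is of constant sign on the simplex Σ := {(x_0,…,x_n) : a ≤ x_0 < x_1 < … < x_n ≤ b}: either det(g_i(x_j))_{i,j=0}^n > 0 for all (x_0,…,x_n) ∈ Σ, or det(g_i(x_j))_{i,j=0}^n < 0 for all (x_0,…,x_n) ∈ Σ. -/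
/-! The tuples `a ≤ x_0 < ⋯ < x_n ≤ b` form a convex, hence preconnected, subset of `ℝ^{n+1}`.
On it `x ↦ det (g_i(x_j))` is continuous and, by the T-system property, nowhere zero, so it
cannot change sign. -/

section Convexity

variable {𝕜 ι : Type*} [Semiring 𝕜] [PartialOrder 𝕜] [IsStrictOrderedRing 𝕜] [Preorder ι]

theorem convex_setOf_strictMono : Convex 𝕜 {x : ι → 𝕜 | StrictMono x} := by
  intro x hx y hy s t hs ht hst i j hij
  simp only [Pi.add_apply, Pi.smul_apply, smul_eq_mul]
  rcases hs.eq_or_lt with rfl | hs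
  · obtain rfl : t = 1 := by simpa using hst
    simpa using hy hij
  · exact add_lt_add_of_lt_of_le (mul_lt_mul_of_pos_left (hx hij) hs)
      (mul_le_mul_of_nonneg_left (hy hij).le ht)

theorem Convex.setOf_strictMono_and_forall_mem {s : Set 𝕜} (hs : Convex 𝕜 s) :
    Convex 𝕜 {x : ι → 𝕜 | StrictMono x ∧ ∀ j, x j ∈ s} :=
  fun _ hx _ hy _ _ ha hb hab =>
    ⟨convex_setOf_strictMono hx.1 hy.1 ha hb hab, fun j => hs (hx.2 j) (hy.2 j) ha hb hab⟩

end Convexity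

theorem continuousOn_collocation_det {X R n : Type*} [TopologicalSpace X] [CommRing R]
    [TopologicalSpace R] [IsTopologicalRing R] [Fintype n] [DecidableEq n]
    {g : n → X → R} {s : Set X} (hg : ∀ i, ContinuousOn (g i) s) :
    ContinuousOn (fun x : n → X => (Matrix.of fun i j => g i (x j)).det) {x | ∀ j, x j ∈ s} :=
  continuous_id.matrix_det.comp_continuousOn <|
    continuousOn_pi.2 fun i => continuousOn_pi.2 fun j =>
      (hg i).comp (continuous_apply j).continuousOn fun _ hx => hx j

theorem tsystem_det_constant_sign_general (a b : ℝ) (n : ℕ)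
    (g : Fin (n + 1) → ℝ → ℝ) (hg : ∀ i, ContinuousOn (g i) (Set.Icc a b))
    (hT : ∀ x : Fin (n + 1) → ℝ, (∀ j, x j ∈ Set.Icc a b) → Function.Injective x →
      (Matrix.of fun i j => g i (x j)).det ≠ 0) :
    (∀ x : Fin (n + 1) → ℝ, StrictMono x → (∀ j, x j ∈ Set.Icc a b) →
      0 < (Matrix.of fun i j => g i (x j)).det) ∨
    (∀ x : Fin (n + 1) → ℝ, StrictMono x → (∀ j, x j ∈ Set.Icc a b) →
      (Matrix.of fun i j => g i (x j)).det < 0) := by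
  set S := {x : Fin (n + 1) → ℝ | StrictMono x ∧ ∀ j, x j ∈ Set.Icc a b}
  have hS : IsPreconnected S := (convex_Icc a b).setOf_strictMono_and_forall_mem.isPreconnected
  have hdet : ContinuousOn (fun x => (Matrix.of fun i j => g i (x j)).det) S :=
    (continuousOn_collocation_det hg).mono fun _ hx => hx.2
  rcases hS.mapsTo_Ioi_or_Iio hdet fun x hx => hT x hx.2 hx.1.injective with hpos | hneg
  · exact Or.inl fun x hx hmem => hpos ⟨hx, hmem⟩
  · exact Or.inr fun x hx hmem => hneg ⟨hx, hmem⟩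

/-- For a T-system `(g_0, …, g_n)` of continuous functions on `[a, b]`, the
determinant `det (g_i(x_j))` has constant sign on the simplex
`a ≤ x_0 < x_1 < … < x_n ≤ b`. -/
theorem tsystem_det_constant_sign (a b : ℝ) (hab : a < b) (n : ℕ)
    (g : Fin (n + 1) → ℝ → ℝ) (hg : ∀ i, ContinuousOn (g i) (Set.Icc a b))
    (hT : ∀ x : Fin (n + 1) → ℝ, (∀ j, x j ∈ Set.Icc a b) → Function.Injective x →
      (Matrix.of fun i j => g i (x j)).det ≠ 0) :
    (∀ x : Fin (n + 1) → ℝ, StrictMono x → (∀ j, x j ∈ Set.Icc a b) →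
      0 < (Matrix.of fun i j => g i (x j)).det) ∨
    (∀ x : Fin (n + 1) → ℝ, StrictMono x → (∀ j, x j ∈ Set.Icc a b) →
      (Matrix.of fun i j => g i (x j)).det < 0) :=
  tsystem_det_constant_sign_general a b n g hg hT
end

section
/- Let a < b be real numbers and let (g_0,…,g_n) be a T-system of continuous functions on [a,b]. Then either (g_0,…,g_n) is a T_+-system on [a,b], or (g_0,…,g_{n-1},−g_n) is a T_+-system on [a,b]. -/
/-- `(g_0, …, g_k)` is a T₊-system on `[a, b]`: the determinant
`det (g_i(x_j))` is strictly positive whenever `a ≤ x_0 < … < x_k ≤ b`. -/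
def IsTPlusSystem {k : ℕ} (a b : ℝ) (g : Fin (k + 1) → ℝ → ℝ) : Prop :=
  ∀ x : Fin (k + 1) → ℝ, StrictMono x → (∀ j, x j ∈ Set.Icc a b) →
    0 < (Matrix.of fun i j => g i (x j)).det

/-!
The increasing node tuples `a ≤ x_0 < … < x_n ≤ b` form a convex, hence connected, subset of
`ℝ^{n+1}`. On it `det (g_i(x_j))` is continuous and, by the T-system property, never zero, so
it has constant sign. If the sign is negative, replacing `g_n` by `-g_n` negates one row and
makes it positive.
-/

open Set

theorem IsPreconnected.forall_pos_or_forall_neg {X α : Type*} [TopologicalSpace X]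
    [LinearOrder α] [TopologicalSpace α] [OrderClosedTopology α] [Zero α]
    {s : Set X} (hs : IsPreconnected s) {f : X → α} (hf : ContinuousOn f s)
    (hf₀ : ∀ x ∈ s, f x ≠ 0) : (∀ x ∈ s, 0 < f x) ∨ ∀ x ∈ s, f x < 0 := by
  by_contra! ⟨⟨x, hx, hfx⟩, ⟨y, hy, hfy⟩⟩
  obtain ⟨z, hz, hfz⟩ := hs.intermediate_value hx hy hf ⟨hfx, hfy⟩
  exact hf₀ z hz hfz

theorem convex_setOf_strictMono_s6 {ι 𝕜 : Type*} [PartialOrder ι] [Field 𝕜] [LinearOrder 𝕜]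
    [IsStrictOrderedRing 𝕜] : Convex 𝕜 {x : ι → 𝕜 | StrictMono x} := by
  intro x (hx : StrictMono x) y (hy : StrictMono y) s t hs ht hst
  rcases hs.eq_or_lt with rfl | hs
  · rw [zero_add] at hst
    simpa [hst] using hy
  · exact (hx.const_mul hs).add_monotone (hy.monotone.const_mul ht)

def collocationMatrix {ι κ X R : Type*} (g : ι → X → R) (x : κ → X) : Matrix ι κ R :=
  Matrix.of fun i j => g i (x j)

section

variable {ι X R : Type*} [Fintype ι] [DecidableEq ι]

theorem continuousOn_det_collocationMatrix [TopologicalSpace X] [CommRing R]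
    [TopologicalSpace R] [IsTopologicalRing R] {g : ι → X → R} {s : Set X}
    (hg : ∀ i, ContinuousOn (g i) s) :
    ContinuousOn (fun x => (collocationMatrix g x).det) (univ.pi fun _ : ι => s) := by
  refine continuous_id.matrix_det.comp_continuousOn ?_
  refine continuousOn_pi.2 fun i => continuousOn_pi.2 fun j => ?_
  exact (hg i).comp (continuous_apply j).continuousOn fun x hx => hx j (mem_univ j)

theorem det_collocationMatrix_update_neg [CommRing R] (g : ι → X → R) (k : ι) (x : ι → X) :
    (collocationMatrix (Function.update g k fun t => -g k t) x).det =
      -(collocationMatrix g x).det := by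
  have hrow : collocationMatrix (Function.update g k fun t => -g k t) x =
      (collocationMatrix g x).updateRow k ((-1 : R) • collocationMatrix g x k) := by
    ext i j
    rcases eq_or_ne i k with rfl | hi
    · simp [collocationMatrix]
    · simp [collocationMatrix, hi]
  rw [hrow, Matrix.det_updateRow_smul, Matrix.updateRow_eq_self, neg_one_mul]

end

theorem tsystem_or_neg_last_tplus_general (a b : ℝ) (n : ℕ)
    (g : Fin (n + 1) → ℝ → ℝ) (hg : ∀ i, ContinuousOn (g i) (Set.Icc a b))
    (hT : ∀ x : Fin (n + 1) → ℝ, (∀ j, x j ∈ Set.Icc a b) → Function.Injective x →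
      (Matrix.of fun i j => g i (x j)).det ≠ 0) :
    IsTPlusSystem a b g ∨
      IsTPlusSystem a b (Function.update g (Fin.last n) (fun x => -(g (Fin.last n) x))) := by
  set S : Set (Fin (n + 1) → ℝ) := {x | StrictMono x} ∩ univ.pi fun _ => Icc a b
  have hS : IsPreconnected S :=
    (convex_setOf_strictMono_s6.inter (convex_pi fun _ _ => convex_Icc a b)).isPreconnected
  have hdet : ContinuousOn (fun x => (collocationMatrix g x).det) S :=
    (continuousOn_det_collocationMatrix hg).mono inter_subset_right
  have hdet₀ : ∀ x ∈ S, (collocationMatrix g x).det ≠ 0 :=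
    fun x hx => hT x (fun j => hx.2 j (mem_univ j)) hx.1.injective
  rcases hS.forall_pos_or_forall_neg hdet hdet₀ with hpos | hneg
  · exact Or.inl fun x hx hxI => hpos x ⟨hx, fun j _ => hxI j⟩
  · refine Or.inr fun x hx hxI => ?_
    change 0 < (collocationMatrix _ x).det
    rw [det_collocationMatrix_update_neg, neg_pos]
    exact hneg x ⟨hx, fun j _ => hxI j⟩

/-- If `(g_0, …, g_n)` is a T-system of continuous functions on `[a, b]`, then
either `(g_0, …, g_n)` or `(g_0, …, g_{n-1}, -g_n)` is a T₊-system on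
`[a, b]`. -/
theorem tsystem_or_neg_last_tplus (a b : ℝ) (hab : a < b) (n : ℕ)
    (g : Fin (n + 1) → ℝ → ℝ) (hg : ∀ i, ContinuousOn (g i) (Set.Icc a b))
    (hT : ∀ x : Fin (n + 1) → ℝ, (∀ j, x j ∈ Set.Icc a b) → Function.Injective x →
      (Matrix.of fun i j => g i (x j)).det ≠ 0) :
    IsTPlusSystem a b g ∨
      IsTPlusSystem a b (Function.update g (Fin.last n) (fun x => -(g (Fin.last n) x))) :=
  tsystem_or_neg_last_tplus_general a b n g hg hT
end

section
/- Let a < b be real numbers and let g_0,…,g_n be real-valued functions that are continuous on [a,b] and n times differentiable on (a,b). If (g_0,…,g_n) is an M_+-system on [a,b], then W_0^k(x) ≥ 0 for every x ∈ (a,b) and every k ∈ {0,…,n}. -/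
/-!
By a mean value theorem for iterated forward differences, the Wronskian `W_0^k(x)` is the limit
as `ε → 0⁺` of `det (Δ_ε^j g_i(x) / ε^j)`. An upper unitriangular change of columns turns
`det (Δ_ε^j g_i(x))` into `det (g_i(x + j ε))`, which is positive because `(g_0, …, g_k)` is a
T₊-system and `x < x + ε < … < x + k ε` are nodes in `[a, b]`. Hence the limit is nonnegative.
-/

open Set Filter Topology

/-- The Wronskian `W_0^k(x) = det (g_i^{(j)}(x))_{i,j=0}^k`, with the
derivatives taken within the open interval `(a, b)`. -/
noncomputable def wronskian (a b : ℝ) {n : ℕ} (g : Fin (n + 1) → ℝ → ℝ)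
    (k : ℕ) (hk : k ≤ n) (x : ℝ) : ℝ :=
  (Matrix.of fun i j : Fin (k + 1) =>
    iteratedDerivWithin (j : ℕ) (g (Fin.castLE (by omega) i)) (Set.Ioo a b) x).det

theorem eventually_forall_Icc_of_eventually_nhds {P : ℝ → Prop} {x : ℝ} (D : ℝ)
    (h : ∀ᶠ y in 𝓝 x, P y) : ∀ᶠ ε in 𝓝[>] 0, ∀ y ∈ Icc x (x + D * ε), P y := by
  obtain ⟨ρ, hρ, hball⟩ := Metric.eventually_nhds_iff.1 h
  have hD : Tendsto (fun ε : ℝ => D * ε) (𝓝 0) (𝓝 0) := by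
    simpa using (continuous_const_mul D).tendsto 0
  filter_upwards [nhdsWithin_le_nhds (hD.eventually (Metric.ball_mem_nhds 0 hρ))]
    with ε hε y hy
  rw [dist_zero_right, Real.norm_eq_abs] at hε
  apply hball
  rw [Real.dist_eq, abs_of_nonneg (by linarith [hy.1])]
  linarith [hy.2, le_abs_self (D * ε)]

theorem hasDerivAt_fwdDiff {f f' : ℝ → ℝ} {y ε : ℝ}
    (hshift : HasDerivAt f (f' (y + ε)) (y + ε)) (h : HasDerivAt f (f' y) y) :
    HasDerivAt (fwdDiff ε f) (fwdDiff ε f' y) y :=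
  (hshift.comp_add_const y ε).sub h

theorem hasDerivAt_fwdDiff_of_Icc {F : ℕ → ℝ → ℝ} {N m : ℕ} {x ε : ℝ} (hε : 0 ≤ ε)
    (hF : ∀ j < N, ∀ y ∈ Icc x (x + (m + 1) * ε), HasDerivAt (F j) (F (j + 1) y) y) :
    ∀ j < N, ∀ y ∈ Icc x (x + m * ε),
      HasDerivAt (fwdDiff ε (F j)) (fwdDiff ε (F (j + 1)) y) y := by
  intro j hj y hy
  exact hasDerivAt_fwdDiff (hF j hj _ ⟨by linarith [hy.1], by linarith [hy.2]⟩)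
    (hF j hj _ ⟨hy.1, by linarith [hy.2]⟩)

theorem exists_fwdDiff_iterate_eq_pow_mul (m : ℕ) {F : ℕ → ℝ → ℝ} {x ε : ℝ} (hε : 0 < ε)
    (hF : ∀ j < m, ∀ y ∈ Icc x (x + m * ε), HasDerivAt (F j) (F (j + 1) y) y) :
    ∃ ξ ∈ Icc x (x + m * ε), (fwdDiff ε)^[m] (F 0) x = ε ^ m * F m ξ := by
  induction m generalizing F with
  | zero => exact ⟨x, by simp, by simp⟩
  | succ m ih =>
    push_cast at hF
    obtain ⟨ξ, hξ, hξeq⟩ := ih (F := fun j => fwdDiff ε (F j))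
      (hasDerivAt_fwdDiff_of_Icc hε.le fun j hj => hF j (by omega))
    have hsub : Icc ξ (ξ + ε) ⊆ Icc x (x + (m + 1) * ε) :=
      Icc_subset_Icc hξ.1 (by linarith [hξ.2])
    obtain ⟨c, hc, hslope⟩ := exists_hasDerivAt_eq_slope (F m) (F (m + 1))
      (by linarith : ξ < ξ + ε)
      (fun y hy => (hF m (by omega) y (hsub hy)).continuousAt.continuousWithinAt)
      (fun y hy => hF m (by omega) y (hsub (Ioo_subset_Icc_self hy)))
    refine ⟨c, by push_cast; exact hsub (Ioo_subset_Icc_self hc), ?_⟩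
    rw [Function.iterate_succ_apply, hξeq, fwdDiff, hslope, add_sub_cancel_left]
    field_simp
    ring

theorem exists_fwdDiff_iterate_succ_eq {m : ℕ} {F : ℕ → ℝ → ℝ} {x ε : ℝ} (hε : 0 < ε)
    (hF : ∀ j < m, ∀ y ∈ Icc x (x + (m + 1) * ε), HasDerivAt (F j) (F (j + 1) y) y) :
    ∃ ξ ∈ Icc x (x + m * ε), (fwdDiff ε)^[m + 1] (F 0) x = ε ^ m * fwdDiff ε (F m) ξ := by
  rw [Function.iterate_succ_apply]
  exact exists_fwdDiff_iterate_eq_pow_mul m (F := fun j => fwdDiff ε (F j)) hε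
    (hasDerivAt_fwdDiff_of_Icc hε.le hF)

/-- The errors `o(u - x)` and `o(u + ε - x)` of the linear approximation at `x` are both `o(ε)`,
since `u, u + ε ∈ [x, x + (C + 1) ε]`. -/
theorem HasDerivAt.eventually_abs_fwdDiff_sub_le {f : ℝ → ℝ} {f' x C δ : ℝ}
    (hf : HasDerivAt f f' x) (hC : 0 ≤ C) (hδ : 0 < δ) :
    ∀ᶠ ε in 𝓝[>] 0, ∀ u ∈ Icc x (x + C * ε), |fwdDiff ε f u - ε * f'| ≤ δ * ε := by
  set φ : ℝ → ℝ := fun y => f y - f x - (y - x) * f'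
  have hφ : ∀ᶠ y in 𝓝 x, |φ y| ≤ δ / (2 * C + 1) * |y - x| := by
    have := (hasDerivAt_iff_isLittleO.1 hf).def (by positivity : 0 < δ / (2 * C + 1))
    simpa [φ, smul_eq_mul, mul_comm] using this
  filter_upwards [eventually_forall_Icc_of_eventually_nhds (C + 1) hφ, self_mem_nhdsWithin]
    with ε hε (hεpos : 0 < ε) u hu
  have hu₀ := hε u ⟨hu.1, by nlinarith [hu.2]⟩
  have hu₁ := hε (u + ε) ⟨by linarith [hu.1], by linarith [hu.2]⟩
  rw [abs_of_nonneg (by linarith [hu.1] : 0 ≤ u - x)] at hu₀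
  rw [abs_of_nonneg (by linarith [hu.1] : 0 ≤ u + ε - x)] at hu₁
  have hsplit : fwdDiff ε f u - ε * f' = φ (u + ε) - φ u := by simp only [fwdDiff, φ]; ring
  have hc : δ / (2 * C + 1) * (2 * C + 1) = δ := by field_simp
  calc |fwdDiff ε f u - ε * f'| ≤ |φ (u + ε)| + |φ u| := hsplit ▸ abs_sub _ _
    _ ≤ δ / (2 * C + 1) * ((u + ε - x) + (u - x)) := by linarith
    _ ≤ δ / (2 * C + 1) * ((2 * C + 1) * ε) := by gcongr; linarith [hu.2]
    _ = δ * ε := by rw [← mul_assoc, hc]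

theorem tendsto_fwdDiff_iterate_div_pow {F : ℕ → ℝ → ℝ} {m : ℕ} {s : Set ℝ} {x : ℝ}
    (hs : s ∈ 𝓝 x) (hF : ∀ j < m, ∀ y ∈ s, HasDerivAt (F j) (F (j + 1) y) y) :
    Tendsto (fun ε => (fwdDiff ε)^[m] (F 0) x / ε ^ m) (𝓝[>] 0) (𝓝 (F m x)) := by
  rcases m with _ | k
  · simp
  rw [Metric.tendsto_nhds]
  intro δ hδ
  filter_upwards [eventually_forall_Icc_of_eventually_nhds (k + 1) hs,
    (hF k k.lt_succ_self x (mem_of_mem_nhds hs)).eventually_abs_fwdDiff_sub_le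
      (Nat.cast_nonneg k) (half_pos hδ), self_mem_nhdsWithin]
    with ε hsub hslope (hε : 0 < ε)
  obtain ⟨ξ, hξ, hξeq⟩ := exists_fwdDiff_iterate_succ_eq hε
    fun j hj y hy => hF j (by omega) y (hsub y hy)
  have hdiv : (fwdDiff ε)^[k + 1] (F 0) x / ε ^ (k + 1) - F (k + 1) x
      = (fwdDiff ε (F k) ξ - ε * F (k + 1) x) / ε := by
    rw [hξeq]; field_simp; ring
  rw [Real.dist_eq, hdiv, abs_div, abs_of_pos hε, div_lt_iff₀ hε]
  linarith [hslope ξ hξ, mul_lt_mul_of_pos_right (half_lt_self hδ) hε]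

/-- Column `j` holds the coefficients of `Δ_ε^j f (x)` in the values `f (x + p ε)`. -/
def alternatingBinomialMatrix (k : ℕ) : Matrix (Fin k) (Fin k) ℝ :=
  Matrix.of fun p j => (-1) ^ ((j : ℕ) - p) * ((j : ℕ).choose p)

theorem det_alternatingBinomialMatrix (k : ℕ) : (alternatingBinomialMatrix k).det = 1 := by
  have htri : (alternatingBinomialMatrix k).IsUpperTriangular := fun p j (hjp : j < p) => by
    simp [alternatingBinomialMatrix, Nat.choose_eq_zero_of_lt (Fin.lt_def.1 hjp)]
  rw [Matrix.det_of_isUpperTriangular htri]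
  exact Finset.prod_eq_one fun p _ => by simp [alternatingBinomialMatrix]

theorem fwdDiff_iterate_matrix_eq_mul {k : ℕ} (f : Fin k → ℝ → ℝ) (x ε : ℝ) :
    Matrix.of (fun i j : Fin k => (fwdDiff ε)^[j] (f i) x)
      = Matrix.of (fun i j : Fin k => f i (x + j * ε)) * alternatingBinomialMatrix k := by
  ext i j
  simp only [Matrix.mul_apply, Matrix.of_apply, alternatingBinomialMatrix]
  rw [fwdDiff_iter_eq_sum_shift, Fin.sum_univ_eq_sum_range
      (fun p => f i (x + p * ε) * ((-1) ^ ((j : ℕ) - p) * ((j : ℕ).choose p : ℝ))),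
    ← Finset.sum_subset (Finset.range_subset_range.2 (by omega : (j : ℕ) + 1 ≤ k))]
  · refine Finset.sum_congr rfl fun p _ => ?_
    simp only [zsmul_eq_mul, nsmul_eq_mul]
    push_cast
    ring
  · intro p _ hp
    rw [Finset.mem_range, not_lt] at hp
    simp [Nat.choose_eq_zero_of_lt (by omega : (j : ℕ) < p)]

theorem det_fwdDiff_iterate_div_pow_pos {k : ℕ} (f : Fin k → ℝ → ℝ) {x ε : ℝ} (hε : 0 < ε)
    (h : 0 < (Matrix.of fun i j : Fin k => f i (x + j * ε)).det) :
    0 < (Matrix.of fun i j : Fin k => (fwdDiff ε)^[j] (f i) x / ε ^ (j : ℕ)).det := by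
  have hdiag : Matrix.of (fun i j : Fin k => (fwdDiff ε)^[j] (f i) x / ε ^ (j : ℕ))
      = Matrix.of (fun i j : Fin k => (fwdDiff ε)^[j] (f i) x)
        * Matrix.diagonal fun j : Fin k => (ε ^ (j : ℕ))⁻¹ := by
    ext i j
    simp [Matrix.mul_diagonal, div_eq_mul_inv]
  rw [hdiag, Matrix.det_mul, fwdDiff_iterate_matrix_eq_mul, Matrix.det_mul,
    det_alternatingBinomialMatrix, mul_one, Matrix.det_diagonal]
  exact mul_pos h (Finset.prod_pos fun j _ => by positivity)

theorem tendsto_det_fwdDiff_iterate_div_pow {k : ℕ} {F : Fin (k + 1) → ℕ → ℝ → ℝ}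
    {s : Set ℝ} {x : ℝ} (hs : s ∈ 𝓝 x)
    (hF : ∀ i, ∀ j < k, ∀ y ∈ s, HasDerivAt (F i j) (F i (j + 1) y) y) :
    Tendsto (fun ε => (Matrix.of fun i j : Fin (k + 1) =>
        (fwdDiff ε)^[j] (F i 0) x / ε ^ (j : ℕ)).det)
      (𝓝[>] 0) (𝓝 (Matrix.of fun i j : Fin (k + 1) => F i j x).det) := by
  refine ((continuous_id.matrix_det).tendsto _).comp (tendsto_pi_nhds.2 fun i =>
    tendsto_pi_nhds.2 fun j => ?_)
  exact tendsto_fwdDiff_iterate_div_pow hs fun l hl => hF i l (by omega)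

theorem hasDerivAt_iteratedDerivWithin_of_isOpen {f : ℝ → ℝ} {s : Set ℝ} {j : ℕ} {y : ℝ}
    (hs : IsOpen s) (hf : DifferentiableOn ℝ (iteratedDerivWithin j f s) s) (hy : y ∈ s) :
    HasDerivAt (iteratedDerivWithin j f s) (iteratedDerivWithin (j + 1) f s y) y := by
  rw [iteratedDerivWithin_succ, derivWithin_of_isOpen hs hy]
  exact ((hf y hy).differentiableAt (hs.mem_nhds hy)).hasDerivAt

/-- If `g_0, …, g_n` are continuous on `[a, b]`, `n` times differentiable on
`(a, b)`, and form an M₊-system on `[a, b]`, then all the Wronskians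
`W_0^k`, `k = 0, …, n`, are nonnegative on `(a, b)`. -/
theorem mplus_wronskian_nonneg (a b : ℝ) (n : ℕ)
    (g : Fin (n + 1) → ℝ → ℝ)
    (hdiff : ∀ i, ∀ j : ℕ, j < n →
      DifferentiableOn ℝ (iteratedDerivWithin j (g i) (Set.Ioo a b)) (Set.Ioo a b))
    (hM : ∀ k : ℕ, ∀ hk : k ≤ n,
      IsTPlusSystem a b (fun i : Fin (k + 1) => g (Fin.castLE (by omega) i))) :
    ∀ x ∈ Set.Ioo a b, ∀ k : ℕ, ∀ hk : k ≤ n, 0 ≤ wronskian a b g k hk x := by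
  intro x hx k hk
  set f : Fin (k + 1) → ℝ → ℝ := fun i => g (Fin.castLE (by omega) i)
  have hlim := tendsto_det_fwdDiff_iterate_div_pow (F := fun i j => iteratedDerivWithin j (f i)
    (Ioo a b)) (Ioo_mem_nhds hx.1 hx.2) fun i j hj y hy =>
      hasDerivAt_iteratedDerivWithin_of_isOpen isOpen_Ioo (hdiff _ j (by omega)) hy
  simp only [iteratedDerivWithin_zero] at hlim
  have hpos : ∀ᶠ ε in 𝓝[>] 0,
      0 < (Matrix.of fun i j : Fin (k + 1) => (fwdDiff ε)^[j] (f i) x / ε ^ (j : ℕ)).det := by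
    filter_upwards [eventually_forall_Icc_of_eventually_nhds k (Icc_mem_nhds hx.1 hx.2),
      self_mem_nhdsWithin] with ε hnodes (hε : 0 < ε)
    refine det_fwdDiff_iterate_div_pow_pos f hε (hM k hk _ ?_ fun j => hnodes _ ⟨?_, ?_⟩)
    · intro p q hpq
      have : ((p : ℕ) : ℝ) < q := by exact_mod_cast hpq
      dsimp only; nlinarith
    · have : (0 : ℝ) ≤ (j : ℕ) * ε := by positivity
      linarith
    · have : ((j : ℕ) : ℝ) ≤ k := by exact_mod_cast Nat.lt_succ_iff.1 j.is_lt
      nlinarith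
  exact ge_of_tendsto hlim (hpos.mono fun _ => le_of_lt)
end

section
/- Let a < b be real numbers and let g_0,…,g_n be real-valued functions that are continuous on [a,b] and n times differentiable on (a,b). If g_0(x) > 0 for all x ∈ [a,b] and W_0^k(x) > 0 for every x ∈ (a,b) and every k ∈ {1,…,n}, then (g_0,…,g_n) is an M_+-system on [a,b]. -/
/-!
The classical reduction `g_i ↦ (g_i / g_0)'`, `i ≥ 1`, drives an induction on the number of
functions. By the Leibniz rule, `W(g_0, …, g_k) = g_0^{k+1} W((g_1/g_0)', …, (g_k/g_0)')`, so the
reduced system again has positive Wronskians. Conversely, dividing column `j` of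
`det (g_i(x_j))` by `g_0(x_j)` and subtracting consecutive columns leaves
`det ((g_i/g_0)(x_{j+1}) - (g_i/g_0)(x_j))`.
The determinant is linear in each column, so the mean value theorem, applied one column at a time,
turns this into a positive multiple of `det ((g_i/g_0)'(t_j))` with `x_j < t_j < x_{j+1}`, which is
positive by induction. Only interior points `t_j` occur, so the induction runs on `(a, b)`, and
continuity on `[a, b]` enters only at the last step.
-/

open Set Finset Matrix

/-- Weaker than `ContDiffOn ℝ d (A 0) I`: the derivatives must exist but need not be continuous. -/
def HasDerivTower (I : Set ℝ) (A : ℕ → ℝ → ℝ) (d : ℕ) : Prop :=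
  ∀ j < d, ∀ x ∈ I, HasDerivAt (A j) (A (j + 1) x) x

noncomputable def leibniz (A B : ℕ → ℝ → ℝ) (j : ℕ) (x : ℝ) : ℝ :=
  ∑ r ∈ range (j + 1), (j.choose r : ℝ) * (A r x * B (j - r) x)

@[simp]
lemma leibniz_zero (A B : ℕ → ℝ → ℝ) (x : ℝ) : leibniz A B 0 x = A 0 x * B 0 x := by
  simp [leibniz]

lemma hasDerivTower_const (I : Set ℝ) (c : ℝ) (d : ℕ) :
    HasDerivTower I (fun j _ => if j = 0 then c else 0) d := fun j _ x _ => by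
  simpa using hasDerivAt_const x (if j = 0 then c else 0)

lemma hasDerivTower_iteratedDerivWithin {I : Set ℝ} (hI : IsOpen I) {f : ℝ → ℝ} {d : ℕ}
    (hf : ∀ j < d, DifferentiableOn ℝ (iteratedDerivWithin j f I) I) :
    HasDerivTower I (fun j => iteratedDerivWithin j f I) d := fun j hj x hx => by
  simp only [iteratedDerivWithin_succ, derivWithin_of_isOpen hI hx]
  exact ((hf j hj).differentiableAt (hI.mem_nhds hx)).hasDerivAt

namespace HasDerivTower

variable {I : Set ℝ} {A B : ℕ → ℝ → ℝ} {d : ℕ}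

lemma mono (h : HasDerivTower I A d) {d' : ℕ} (hd : d' ≤ d) : HasDerivTower I A d' :=
  fun j hj => h j (hj.trans_le hd)

lemma shift (h : HasDerivTower I A (d + 1)) : HasDerivTower I (fun j => A (j + 1)) d :=
  fun j hj => h (j + 1) (by omega)

lemma neg (h : HasDerivTower I A d) : HasDerivTower I (fun j x => -A j x) d :=
  fun j hj x hx => (h j hj x hx).neg

lemma leibniz (hA : HasDerivTower I A d) (hB : HasDerivTower I B d) :
    HasDerivTower I (leibniz A B) d := by
  intro j hj x hx
  have hterm : ∀ r ∈ range (j + 1), HasDerivAt (fun y => (j.choose r : ℝ) * (A r y * B (j - r) y))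
      ((j.choose r : ℝ) * (A r x * B (j - r + 1) x) +
        (j.choose r : ℝ) * (A (r + 1) x * B (j - r) x)) x := fun r hr => by
    have hr : r ≤ j := Nat.lt_succ_iff.mp (mem_range.mp hr)
    simpa [mul_add, add_comm, mul_comm] using
      ((hA r (by omega) x hx).mul (hB (j - r) (by omega) x hx)).const_mul (j.choose r : ℝ)
  refine (HasDerivAt.fun_sum hterm).congr_deriv ?_
  rw [_root_.leibniz, sum_choose_succ_mul (fun r s => A r x * B s x), ← sum_add_distrib]
  refine sum_congr rfl fun r hr => ?_
  rw [show j + 1 - r = j - r + 1 by have := mem_range.mp hr; omega]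

lemma eqOn (hI : IsOpen I) (hA : HasDerivTower I A d) (hB : HasDerivTower I B d)
    (h0 : EqOn (A 0) (B 0) I) : ∀ j ≤ d, EqOn (A j) (B j) I
  | 0, _ => h0
  | j + 1, hj => fun x hx =>
    ((hA j hj x hx).congr_of_eventuallyEq
      (Filter.eventuallyEq_of_mem (hI.mem_nhds hx) (eqOn hI hA hB h0 j (by omega))).symm).unique
      (hB j hj x hx)

/-- The tower of `(B 0)⁻¹` is built from `((B 0)⁻¹)' = -(B 0)' * (B 0)⁻¹ * (B 0)⁻¹`. -/
lemma exists_inv (hB : HasDerivTower I B d) (hB0 : ∀ x ∈ I, B 0 x ≠ 0) :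
    ∃ C, HasDerivTower I C d ∧ ∀ x, C 0 x = (B 0 x)⁻¹ := by
  induction d with
  | zero => exact ⟨fun _ x => (B 0 x)⁻¹, fun j hj => absurd hj (Nat.not_lt_zero j), fun _ => rfl⟩
  | succ d ih =>
    obtain ⟨C, hC, hC0⟩ := ih (hB.mono d.le_succ)
    have hD := (hB.shift.neg).leibniz (hC.leibniz hC)
    refine ⟨fun
      | 0 => fun x => (B 0 x)⁻¹
      | j + 1 => _root_.leibniz (fun i x => -B (i + 1) x) (_root_.leibniz C C) j, ?_, fun _ => rfl⟩
    rintro (_ | j) hj x hx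
    · refine ((hB 0 d.succ_pos x hx).inv (hB0 x hx)).congr_deriv ?_
      simp [hC0, div_eq_mul_inv, sq]
    · exact hD j (by omega) x hx

end HasDerivTower

namespace Matrix

lemma det_eq_det_submatrix_succ_of_row_zero {R : Type*} [CommRing R] {m : ℕ}
    (M : Matrix (Fin (m + 1)) (Fin (m + 1)) R) (h00 : M 0 0 = 1)
    (h0 : ∀ j : Fin m, M 0 j.succ = 0) :
    M.det = (M.submatrix Fin.succ Fin.succ).det := by
  simp [det_succ_row_zero, Fin.sum_univ_succ, h00, h0]

/-- Subtracting from each column the previous one turns a first row of ones into `(1, 0, …, 0)`. -/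
lemma det_eq_det_sub_of_row_zero {R : Type*} [CommRing R] {m : ℕ}
    (M : Matrix (Fin (m + 1)) (Fin (m + 1)) R) (h0 : ∀ j, M 0 j = 1) :
    M.det = (of fun i j : Fin m => M i.succ j.succ - M i.succ j.castSucc).det := by
  rw [det_eq_of_forall_col_eq_smul_add_pred (A := M) (B := of fun i j =>
      Fin.cases (M i 0) (fun j => M i j.succ - M i j.castSucc) j) (fun _ => 1) (fun _ => rfl)
      (fun i j => by simp)]
  exact det_eq_det_submatrix_succ_of_row_zero _ (by simp [h0]) (by simp [h0])

lemma det_leibniz_eq_pow_mul {m : ℕ} (A : Fin m → ℕ → ℝ → ℝ) (B : ℕ → ℝ → ℝ) (x : ℝ) :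
    (of fun i j : Fin m => leibniz (A i) B j x).det =
      B 0 x ^ m * (of fun i j : Fin m => A i j x).det := by
  let T : Matrix (Fin m) (Fin m) ℝ :=
    of fun r j => if r ≤ j then ((j : ℕ).choose r : ℝ) * B (j - r) x else 0
  have hT : T.IsUpperTriangular := fun r j h => if_neg (not_le.mpr h)
  have hfactor :
      (of fun i j : Fin m => leibniz (A i) B j x) = (of fun i j : Fin m => A i j x) * T := by
    ext i j
    simp only [leibniz, mul_apply, of_apply, T, mul_ite, mul_zero, Fin.le_def]
    rw [Fin.sum_univ_eq_sum_range (fun r => if r ≤ (j : ℕ) then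
      A i r x * ((j : ℕ).choose r * B (j - r) x) else 0) m,
      ← sum_subset (range_subset_range.mpr j.isLt) fun r _ hr => if_neg (by simpa using hr)]
    refine sum_congr rfl fun r hr => ?_
    rw [if_pos (Nat.lt_succ_iff.mp (mem_range.mp hr))]
    ring
  rw [hfactor, det_mul, det_of_isUpperTriangular hT, mul_comm]
  simp [T]

/-- Cauchy's mean value theorem, for a determinant as a function of one of its columns. -/
lemma exists_det_updateCol_sub_eq {n : Type*} [Fintype n] [DecidableEq n] (A : Matrix n n ℝ)
    (p : n) {ψ h : n → ℝ → ℝ} {u v : ℝ} (huv : u < v) (hc : ∀ i, ContinuousOn (ψ i) (Icc u v))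
    (hd : ∀ i, ∀ t ∈ Ioo u v, HasDerivAt (ψ i) (h i t) t) :
    ∃ τ ∈ Ioo u v, (A.updateCol p fun i => ψ i v - ψ i u).det =
      (v - u) * (A.updateCol p fun i => h i τ).det := by
  have hdet : ∀ w : n → ℝ, (A.updateCol p w).det = ∑ i, A.adjugate p i * w i := fun w => by
    rw [← cramer_apply, cramer_eq_adjugate_mulVec]
    rfl
  obtain ⟨τ, hτ, hslope⟩ := exists_hasDerivAt_eq_slope (fun s => ∑ i, A.adjugate p i * ψ i s)
    (fun t => ∑ i, A.adjugate p i * h i t) huv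
    (continuousOn_finsetSum _ fun i _ => (hc i).const_smul (A.adjugate p i))
    (fun t ht => HasDerivAt.fun_sum fun i _ => (hd i t ht).const_mul _)
  refine ⟨τ, hτ, ?_⟩
  simp only [hdet, mul_sub, sum_sub_distrib] at hslope ⊢
  rw [hslope]
  field_simp [(sub_pos.mpr huv).ne']

lemma det_sub_pos_of_det_deriv_pos {n : Type*} [Fintype n] [DecidableEq n] {ψ h : n → ℝ → ℝ}
    {u v : n → ℝ}
    (huv : ∀ j, u j < v j) (hc : ∀ i j, ContinuousOn (ψ i) (Icc (u j) (v j)))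
    (hd : ∀ i j, ∀ t ∈ Ioo (u j) (v j), HasDerivAt (ψ i) (h i t) t)
    (hh : ∀ t : n → ℝ, (∀ j, t j ∈ Ioo (u j) (v j)) → 0 < (of fun i j => h i (t j)).det) :
    0 < (of fun i j => ψ i (v j) - ψ i (u j)).det := by
  let M (S : Finset n) (t : n → ℝ) : Matrix n n ℝ :=
    of fun i j => if j ∈ S then ψ i (v j) - ψ i (u j) else h i (t j)
  suffices ∀ S t, (∀ j, t j ∈ Ioo (u j) (v j)) → 0 < (M S t).det by
    simpa [M] using this univ (fun j => (u j + v j) / 2) fun j =>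
      ⟨by linarith [huv j], by linarith [huv j]⟩
  intro S
  induction S using Finset.induction_on with
  | empty => simpa [M] using hh
  | insert p S hp ih =>
    intro t ht
    obtain ⟨τ, hτ, heq⟩ := exists_det_updateCol_sub_eq (M S t) p (huv p) (fun i => hc i p)
      (fun i => hd i p)
    have hupd : M (insert p S) t = (M S t).updateCol p fun i => ψ i (v p) - ψ i (u p) := by
      ext i j
      by_cases hj : j = p <;> simp [M, hj]
    have hupd' : (M S t).updateCol p (fun i => h i τ) = M S (Function.update t p τ) := by
      ext i j
      by_cases hj : j = p <;> simp [M, hj, hp]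
    rw [hupd, heq, hupd']
    refine mul_pos (sub_pos.mpr (huv p)) (ih _ fun j => ?_)
    by_cases hj : j = p
    · subst hj; simpa using hτ
    · simpa [hj] using ht j

end Matrix

lemma det_pos_of_hasDerivAt_div {m : ℕ} {G : Fin (m + 1) → ℝ → ℝ} {h : Fin m → ℝ → ℝ}
    {x : Fin (m + 1) → ℝ} (hx : StrictMono x)
    (hc : ∀ i, ContinuousOn (G i) (Icc (x 0) (x (Fin.last m))))
    (hpos : ∀ t ∈ Icc (x 0) (x (Fin.last m)), 0 < G 0 t)
    (hd : ∀ i, ∀ t ∈ Ioo (x 0) (x (Fin.last m)),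
      HasDerivAt (fun s => G i.succ s / G 0 s) (h i t) t)
    (hh : ∀ t : Fin m → ℝ, StrictMono t → (∀ j, t j ∈ Ioo (x 0) (x (Fin.last m))) →
      0 < (of fun i j => h i (t j)).det) :
    0 < (of fun i j => G i (x j)).det := by
  have hxI : ∀ j, x j ∈ Icc (x 0) (x (Fin.last m)) :=
    fun j => ⟨hx.monotone (Fin.zero_le _), hx.monotone (Fin.le_last _)⟩
  have hgap : ∀ j : Fin m, Icc (x j.castSucc) (x j.succ) ⊆ Icc (x 0) (x (Fin.last m)) :=
    fun j => Icc_subset_Icc (hxI _).1 (hxI _).2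
  have hfactor : (of fun i j => G i (x j)) =
      (of fun i j => G i (x j) / G 0 (x j)) * diagonal fun j => G 0 (x j) := by
    ext i j
    simp [div_mul_cancel₀ _ (hpos _ (hxI j)).ne']
  rw [hfactor, det_mul, det_diagonal, det_eq_det_sub_of_row_zero _ fun j => by
    simp [div_self (hpos _ (hxI j)).ne']]
  refine mul_pos ?_ (prod_pos fun j _ => hpos _ (hxI j))
  refine det_sub_pos_of_det_deriv_pos (ψ := fun i s => G i.succ s / G 0 s)
    (fun j => hx j.castSucc_lt_succ)
    (fun i j => ((hc i.succ).div (hc 0) fun t ht => (hpos t ht).ne').mono (hgap j))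
    (fun i j t ht => hd i t (Ioo_subset_Ioo (hxI _).1 (hxI _).2 ht)) fun t ht => hh t ?_ ?_
  · intro i j hij
    calc t i < x i.succ := (ht i).2
      _ ≤ x j.castSucc := hx.monotone (Fin.succ_le_castSucc_iff.mpr hij)
      _ < t j := (ht j).1
  · exact fun j => Ioo_subset_Ioo (hxI _).1 (hxI _).2 (ht j)

/-- Here `k` is the size of the Wronskian, so `k` stands for the paper's `W_0^{k-1}`, and `k = 0`
is vacuous. -/
def HasPosWronskians (I : Set ℝ) {m : ℕ} (G : Fin m → ℕ → ℝ → ℝ) : Prop :=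
  ∀ k (hk : k ≤ m), ∀ x ∈ I, 0 < (of fun i j : Fin k => G (Fin.castLE hk i) j x).det

/-- With `C = (F_0)⁻¹`, this is `W(F_0, …, F_k) = F_0^{k+1} W((F_1/F_0)', …, (F_k/F_0)')`. -/
lemma det_eq_pow_mul_det_leibniz_inv {I : Set ℝ} (hI : IsOpen I) {k d : ℕ} (hkd : k ≤ d)
    {F : Fin (k + 1) → ℕ → ℝ → ℝ} (hF : ∀ i, HasDerivTower I (F i) d) {C : ℕ → ℝ → ℝ}
    (hC : HasDerivTower I C d) (hC0 : ∀ x, C 0 x = (F 0 0 x)⁻¹) (hF0 : ∀ x ∈ I, F 0 0 x ≠ 0)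
    {x : ℝ} (hx : x ∈ I) :
    (of fun i j : Fin (k + 1) => F i j x).det =
      F 0 0 x ^ (k + 1) * (of fun i j : Fin k => leibniz (F i.succ) C (j + 1) x).det := by
  let Q i := leibniz (F i) C
  have hQ : ∀ i, HasDerivTower I (Q i) d := fun i => (hF i).leibniz hC
  have hFQ : ∀ i, ∀ j ≤ d, EqOn (leibniz (Q i) (F 0) j) (F i j) I := fun i =>
    ((hQ i).leibniz (hF 0)).eqOn hI (hF i) fun y hy => by simp [Q, hC0, hF0 y hy]
  have hQ0 : ∀ j ≤ d, EqOn (Q 0 j) (fun _ => if j = 0 then 1 else 0) I :=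
    (hQ 0).eqOn hI (hasDerivTower_const I 1 d) fun y hy => by simp [Q, hC0, hF0 y hy]
  calc (of fun i j : Fin (k + 1) => F i j x).det
      = (of fun i j : Fin (k + 1) => leibniz (Q i) (F 0) j x).det := by
        congr 1
        ext i j
        exact (hFQ i j (by omega) hx).symm
    _ = F 0 0 x ^ (k + 1) * (of fun i j : Fin (k + 1) => Q i j x).det :=
        det_leibniz_eq_pow_mul _ _ _
    _ = _ := by
        rw [det_eq_det_submatrix_succ_of_row_zero _ (by simpa using hQ0 0 (Nat.zero_le _) hx)
          fun j => by simpa using hQ0 (j + 1) (by omega) hx]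
        rfl

namespace HasPosWronskians

variable {I : Set ℝ}

lemma pos {m : ℕ} {G : Fin (m + 1) → ℕ → ℝ → ℝ} (hW : HasPosWronskians I G) {x : ℝ}
    (hx : x ∈ I) : 0 < G 0 0 x := by
  simpa using hW 1 (by omega) x hx

lemma castLE {m k : ℕ} {G : Fin m → ℕ → ℝ → ℝ} (hW : HasPosWronskians I G) (hk : k ≤ m) :
    HasPosWronskians I fun i : Fin k => G (Fin.castLE hk i) :=
  fun l hl x hx => by simpa [Fin.castLE_castLE] using hW l (hl.trans hk) x hx

lemma exists_reduction (hI : IsOpen I) {m : ℕ} {G : Fin (m + 2) → ℕ → ℝ → ℝ}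
    (hG : ∀ i, HasDerivTower I (G i) (m + 1)) (hW : HasPosWronskians I G) :
    ∃ H : Fin (m + 1) → ℕ → ℝ → ℝ, (∀ i, HasDerivTower I (H i) m) ∧ HasPosWronskians I H ∧
      ∀ i, ∀ x ∈ I, HasDerivAt (fun t => G i.succ 0 t / G 0 0 t) (H i 0 x) x := by
  have hG0 : ∀ x ∈ I, G 0 0 x ≠ 0 := fun x hx => (hW.pos hx).ne'
  obtain ⟨C, hC, hC0⟩ := (hG 0).exists_inv hG0
  refine ⟨fun i j => leibniz (G i.succ) C (j + 1), fun i => ((hG i.succ).leibniz hC).shift,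
    fun k hk x hx => ?_, fun i x hx => ?_⟩
  · have h := hW (k + 1) (by omega) x hx
    rw [det_eq_pow_mul_det_leibniz_inv hI hk
      (F := fun i : Fin (k + 1) => G (Fin.castLE (by omega) i)) (fun i => hG _) hC hC0 hG0 hx] at h
    exact pos_of_mul_pos_right h (pow_pos (hW.pos hx) _).le
  · convert ((hG i.succ).leibniz hC) 0 (by omega) x hx using 1
    ext t
    simp [hC0, div_eq_mul_inv]

theorem det_pos [OrdConnected I] (hI : IsOpen I) : ∀ {m : ℕ} {G : Fin (m + 1) → ℕ → ℝ → ℝ},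
    (∀ i, HasDerivTower I (G i) m) → HasPosWronskians I G →
    ∀ x : Fin (m + 1) → ℝ, StrictMono x → (∀ j, x j ∈ I) → 0 < (of fun i j => G i 0 (x j)).det
  | 0, _, _, hW, x, _, hxI => by simpa using hW.pos (hxI 0)
  | m + 1, G, hG, hW, x, hx, hxI => by
    obtain ⟨H, hH, hHW, hHd⟩ := hW.exists_reduction hI hG
    have hsub : Icc (x 0) (x (Fin.last _)) ⊆ I := OrdConnected.out ‹_› (hxI 0) (hxI _)
    exact det_pos_of_hasDerivAt_div hx
      (fun i t ht => (hG i 0 (by omega) t (hsub ht)).continuousAt.continuousWithinAt)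
      (fun t ht => hW.pos (hsub ht)) (fun i t ht => hHd i t (hsub (Ioo_subset_Icc_self ht)))
      fun t ht htI => det_pos hI hH hHW t ht fun j => hsub (Ioo_subset_Icc_self (htI j))

end HasPosWronskians

/-- If `g_0, …, g_n` are continuous on `[a, b]` and `n` times differentiable on
`(a, b)`, with `g_0 > 0` on `[a, b]` and all the Wronskians `W_0^k`,
`k = 1, …, n`, strictly positive on `(a, b)`, then `(g_0, …, g_n)` is an
M₊-system on `[a, b]`. -/
theorem wronskian_pos_mplus (a b : ℝ) (n : ℕ)
    (g : Fin (n + 1) → ℝ → ℝ) (hg : ∀ i, ContinuousOn (g i) (Set.Icc a b))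
    (hdiff : ∀ i, ∀ j : ℕ, j < n →
      DifferentiableOn ℝ (iteratedDerivWithin j (g i) (Set.Ioo a b)) (Set.Ioo a b))
    (hg0 : ∀ x ∈ Set.Icc a b, 0 < g 0 x)
    (hW : ∀ x ∈ Set.Ioo a b, ∀ k : ℕ, 1 ≤ k → ∀ hk : k ≤ n,
      0 < wronskian a b g k hk x) :
    ∀ k : ℕ, ∀ hk : k ≤ n,
      IsTPlusSystem a b (fun i : Fin (k + 1) => g (Fin.castLE (by omega) i)) := by
  let G : Fin (n + 1) → ℕ → ℝ → ℝ := fun i j => iteratedDerivWithin j (g i) (Ioo a b)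
  have hG : ∀ i, HasDerivTower (Ioo a b) (G i) n :=
    fun i => hasDerivTower_iteratedDerivWithin isOpen_Ioo (hdiff i)
  have hGW : HasPosWronskians (Ioo a b) G := by
    rintro (_ | _ | k) hk x hx
    · simp
    · simpa [G] using hg0 x (Ioo_subset_Icc_self hx)
    · exact hW x hx (k + 1) (by omega) (by omega)
  rintro (_ | k) hk x hx hxI
  · simpa using hg0 (x 0) (hxI 0)
  obtain ⟨H, hH, hHW, hHd⟩ :=
    (hGW.castLE (by omega : k + 2 ≤ n + 1)).exists_reduction isOpen_Ioo fun i => (hG _).mono hk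
  have hIoo : Ioo (x 0) (x (Fin.last _)) ⊆ Ioo a b := Ioo_subset_Ioo (hxI 0).1 (hxI _).2
  exact det_pos_of_hasDerivAt_div hx (fun i => (hg _).mono (Icc_subset_Icc (hxI 0).1 (hxI _).2))
    (fun t ht => hg0 t (Icc_subset_Icc (hxI 0).1 (hxI _).2 ht))
    (fun i t ht => by simpa [G] using hHd i t (hIoo ht))
    fun t ht htI => hHW.det_pos isOpen_Ioo hH t ht fun j => hIoo (htI j)
end

section
/- Let a < b be real numbers, let g_2 : [a,b] → ℝ be continuous and strictly convex, let c_0 ≥ 0, and let c_1 ∈ [c_0·a, c_0·b]. Then for every finite nonnegative Borel measure μ on [a,b] with μ([a,b]) = c_0 and ∫ x dμ(x) = c_1 one has ∫ g_2 dμ ≤ ((c_0 b − c_1)/(b − a))·g_2(a) + ((c_1 − c_0 a)/(b − a))·g_2(b), with equality if and only if μ = ((c_0 b − c_1)/(b − a))·δ_a + ((c_1 − c_0 a)/(b − a))·δ_b, where δ_x denotes the Dirac probability measure at the point x. -/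
/-!
On `[a, b]` a convex `g` lies below its secant line `ℓ`, strictly so on `(a, b)` when `g`
is strictly convex. Since `ℓ` is affine, `∫ ℓ dμ` depends only on the mass and the first
moment of `μ`, and it is the right-hand side. Equality means `g = ℓ` `μ`-a.e., i.e.
`μ (a, b) = 0`; then `μ` is carried by `{a, b}`, and its two weights are determined by its
mass and first moment.
-/

open MeasureTheory Set

noncomputable def secant (g : ℝ → ℝ) (a b x : ℝ) : ℝ :=
  ((b - x) * g a + (x - a) * g b) / (b - a)

section Secant

variable {g : ℝ → ℝ} {s : Set ℝ} {a b x : ℝ}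

lemma secant_left (hab : a ≠ b) : secant g a b a = g a := by
  rw [secant, sub_self, zero_mul, add_zero, mul_div_cancel_left₀ _ (sub_ne_zero.2 hab.symm)]

lemma secant_right (hab : a ≠ b) : secant g a b b = g b := by
  rw [secant, sub_self, zero_mul, zero_add, mul_div_cancel_left₀ _ (sub_ne_zero.2 hab.symm)]

lemma continuous_secant : Continuous (secant g a b) := by
  unfold secant; fun_prop

lemma StrictConvexOn.lt_secant (hg : StrictConvexOn ℝ s g) (ha : a ∈ s) (hb : b ∈ s)
    (hx : x ∈ Ioo a b) : g x < secant g a b x := by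
  rw [secant, lt_div_iff₀ (by linarith [hx.1, hx.2]), mul_comm]
  exact hg.secant_strict_mono_aux1 ha hb hx.1 hx.2

lemma ConvexOn.le_secant (hg : ConvexOn ℝ s g) (ha : a ∈ s) (hb : b ∈ s) (hab : a < b)
    (hx : x ∈ Icc a b) : g x ≤ secant g a b x := by
  rcases eq_or_lt_of_le hx.1 with rfl | hax
  · rw [secant_left hab.ne]
  rcases eq_or_lt_of_le hx.2 with rfl | hxb
  · rw [secant_right hab.ne]
  rw [secant, le_div_iff₀ (by linarith), mul_comm]
  exact hg.secant_mono_aux1 ha hb hax hxb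

lemma integral_secant {μ : Measure ℝ} [IsFiniteMeasure μ] (hμ : Integrable (fun x ↦ x) μ) :
    ∫ x, secant g a b x ∂μ =
      (μ.real univ * b - ∫ x, x ∂μ) / (b - a) * g a
        + (∫ x, x ∂μ - μ.real univ * a) / (b - a) * g b := by
  have hb : Integrable (fun x ↦ b - x) μ := (integrable_const b).sub hμ
  have ha : Integrable (fun x ↦ x - a) μ := hμ.sub (integrable_const a)
  simp only [secant]
  rw [integral_div, integral_add (hb.mul_const _) (ha.mul_const _), integral_mul_const,
    integral_mul_const, integral_sub (integrable_const b) hμ,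
    integral_sub hμ (integrable_const a), integral_const, integral_const, smul_eq_mul, smul_eq_mul]
  ring

end Secant

lemma ContinuousOn.integrable_of_ae_mem {X E : Type*} [TopologicalSpace X] [T2Space X]
    [MeasurableSpace X] [OpensMeasurableSpace X] [NormedAddCommGroup E] {f : X → E} {K : Set X}
    {μ : Measure X} [IsFiniteMeasureOnCompacts μ] (hK : IsCompact K) (hf : ContinuousOn f K)
    (hμ : ∀ᵐ x ∂μ, x ∈ K) : Integrable f μ := by
  simpa [IntegrableOn, Measure.restrict_eq_self_of_ae_mem hμ]
    using hf.integrableOn_compact (μ := μ) hK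

namespace MeasureTheory.Measure

variable {α : Type*} [MeasurableSpace α] [MeasurableSingletonClass α]

lemma eq_smul_dirac_add_smul_dirac {μ : Measure α} {a b : α} (hab : a ≠ b)
    (h : μ {a, b}ᶜ = 0) : μ = μ {a} • dirac a + μ {b} • dirac b := by
  have hμ : ∀ᵐ x ∂μ, x ∈ ({a, b} : Set α) := mem_ae_iff.2 h
  conv_lhs => rw [← restrict_eq_self_of_ae_mem hμ, insert_eq,
    restrict_union (disjoint_singleton.2 hab) (measurableSet_singleton b),
    restrict_singleton, restrict_singleton]

lemma integral_smul_dirac_add_smul_dirac {E : Type*} [NormedAddCommGroup E] [NormedSpace ℝ E]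
    [CompleteSpace E] {p q : ENNReal} (hp : p ≠ ⊤) (hq : q ≠ ⊤) (f : α → E) (a b : α) :
    ∫ x, f x ∂(p • dirac a + q • dirac b) = p.toReal • f a + q.toReal • f b := by
  rw [integral_add_measure ((integrable_dirac enorm_lt_top).smul_measure hp)
      ((integrable_dirac enorm_lt_top).smul_measure hq),
    integral_smul_measure, integral_smul_measure, integral_dirac, integral_dirac]

end MeasureTheory.Measure

section Interval

variable {μ : Measure ℝ} {a b : ℝ}

lemma measure_compl_pair_eq_zero (hIcc : μ (Icc a b)ᶜ = 0) (hIoo : μ (Ioo a b) = 0) :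
    μ {a, b}ᶜ = 0 := by
  refine measure_mono_null (fun x hx ↦ ?_) (measure_union_null hIcc hIoo)
  by_cases hxI : x ∈ Icc a b
  · exact Or.inr (by rw [← Icc_sdiff_both]; exact ⟨hxI, hx⟩)
  · exact Or.inl hxI

lemma StrictConvexOn.ae_eq_secant_iff {g : ℝ → ℝ} {s : Set ℝ} (hg : StrictConvexOn ℝ s g)
    (ha : a ∈ s) (hb : b ∈ s) (hab : a < b) (hIcc : μ (Icc a b)ᶜ = 0) :
    g =ᵐ[μ] secant g a b ↔ μ (Ioo a b) = 0 := by
  refine ⟨fun h ↦ measure_mono_null (fun x hx ↦ (hg.lt_secant ha hb hx).ne) (ae_iff.1 h),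
    fun h ↦ ae_iff.2 (measure_mono_null (fun x hx ↦ ?_) (measure_compl_pair_eq_zero hIcc h))⟩
  rintro (rfl | rfl)
  exacts [hx (secant_left hab.ne).symm, hx (secant_right hab.ne).symm]

lemma measure_Ioo_eq_zero_iff_eq_smul_dirac_add_smul_dirac [IsFiniteMeasure μ] (hab : a < b)
    (hIcc : μ (Icc a b)ᶜ = 0) :
    μ (Ioo a b) = 0 ↔
      μ = ENNReal.ofReal ((μ.real univ * b - ∫ x, x ∂μ) / (b - a)) • Measure.dirac a
        + ENNReal.ofReal ((∫ x, x ∂μ - μ.real univ * a) / (b - a)) • Measure.dirac b := by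
  refine ⟨fun hIoo ↦ ?_, fun h ↦ by rw [h]; simp⟩
  have hp : μ {a} ≠ ⊤ := measure_ne_top μ {a}
  have hq : μ {b} ≠ ⊤ := measure_ne_top μ {b}
  have h := Measure.eq_smul_dirac_add_smul_dirac hab.ne (measure_compl_pair_eq_zero hIcc hIoo)
  generalize μ {a} = p at h hp
  generalize μ {b} = q at h hq
  subst h
  have hmass : (p • Measure.dirac a + q • Measure.dirac b).real univ = p.toReal + q.toReal := by
    simp [measureReal_def, ENNReal.toReal_add hp hq]
  rw [hmass, Measure.integral_smul_dirac_add_smul_dirac hp hq, smul_eq_mul, smul_eq_mul]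
  have hba : b - a ≠ 0 := sub_ne_zero.2 hab.ne'
  congr 2
  · refine (ENNReal.ofReal_toReal hp).symm.trans (congrArg ENNReal.ofReal ?_)
    field_simp
    ring
  · refine (ENNReal.ofReal_toReal hq).symm.trans (congrArg ENNReal.ofReal ?_)
    field_simp
    ring

end Interval

theorem convex_moment_max_general (a b : ℝ) (hab : a < b) (g2 : ℝ → ℝ)
    (hg2c : ContinuousOn g2 (Set.Icc a b))
    (hg2conv : StrictConvexOn ℝ (Set.Icc a b) g2)
    (c0 : ℝ) (hc0 : 0 ≤ c0) (c1 : ℝ) :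
    ∀ μ : Measure ℝ, μ (Set.Icc a b)ᶜ = 0 → μ (Set.Icc a b) = ENNReal.ofReal c0 →
      (∫ x, x ∂μ) = c1 →
      (∫ x, g2 x ∂μ ≤
          (c0 * b - c1) / (b - a) * g2 a + (c1 - c0 * a) / (b - a) * g2 b) ∧
      ((∫ x, g2 x ∂μ =
          (c0 * b - c1) / (b - a) * g2 a + (c1 - c0 * a) / (b - a) * g2 b) ↔
        μ = ENNReal.ofReal ((c0 * b - c1) / (b - a)) • Measure.dirac a +
            ENNReal.ofReal ((c1 - c0 * a) / (b - a)) • Measure.dirac b) := by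
  intro μ hIcc hmass hmom
  have hμ : ∀ᵐ x ∂μ, x ∈ Icc a b := mem_ae_iff.2 hIcc
  have huniv : μ univ = ENNReal.ofReal c0 := by
    rw [← Measure.restrict_eq_self_of_ae_mem hμ, Measure.restrict_apply_univ, hmass]
  have : IsFiniteMeasure μ := ⟨huniv ▸ ENNReal.ofReal_lt_top⟩
  have hmass' : μ.real univ = c0 := by rw [measureReal_def, huniv, ENNReal.toReal_ofReal hc0]
  have ha : a ∈ Icc a b := left_mem_Icc.2 hab.le
  have hb : b ∈ Icc a b := right_mem_Icc.2 hab.le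
  have hg : Integrable g2 μ := hg2c.integrable_of_ae_mem isCompact_Icc hμ
  have hsec : Integrable (secant g2 a b) μ :=
    continuous_secant.continuousOn.integrable_of_ae_mem isCompact_Icc hμ
  have hle : g2 ≤ᵐ[μ] secant g2 a b :=
    hμ.mono fun x hx ↦ hg2conv.convexOn.le_secant ha hb hab hx
  rw [← hmass', ← hmom,
    ← integral_secant (continuousOn_id.integrable_of_ae_mem isCompact_Icc hμ)]
  refine ⟨integral_mono_ae hg hsec hle, ?_⟩
  rw [integral_eq_iff_of_ae_le hg hsec hle, hg2conv.ae_eq_secant_iff ha hb hab hIcc]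
  exact measure_Ioo_eq_zero_iff_eq_smul_dirac_add_smul_dirac hab hIcc

/-- For a continuous strictly convex function `g_2` on `[a, b]` and a finite
nonnegative Borel measure `μ` on `[a, b]` of total mass `c_0 ≥ 0` and first
moment `c_1 ∈ [c_0 a, c_0 b]`, one has
`∫ g_2 dμ ≤ ((c_0 b - c_1)/(b - a)) g_2(a) + ((c_1 - c_0 a)/(b - a)) g_2(b)`,
with equality iff
`μ = ((c_0 b - c_1)/(b - a)) δ_a + ((c_1 - c_0 a)/(b - a)) δ_b`. -/
theorem convex_moment_max (a b : ℝ) (hab : a < b) (g2 : ℝ → ℝ)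
    (hg2c : ContinuousOn g2 (Set.Icc a b))
    (hg2conv : StrictConvexOn ℝ (Set.Icc a b) g2)
    (c0 : ℝ) (hc0 : 0 ≤ c0) (c1 : ℝ) (hc1 : c1 ∈ Set.Icc (c0 * a) (c0 * b)) :
    ∀ μ : Measure ℝ, μ (Set.Icc a b)ᶜ = 0 → μ (Set.Icc a b) = ENNReal.ofReal c0 →
      (∫ x, x ∂μ) = c1 →
      (∫ x, g2 x ∂μ ≤
          (c0 * b - c1) / (b - a) * g2 a + (c1 - c0 * a) / (b - a) * g2 b) ∧
      ((∫ x, g2 x ∂μ =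
          (c0 * b - c1) / (b - a) * g2 a + (c1 - c0 * a) / (b - a) * g2 b) ↔
        μ = ENNReal.ofReal ((c0 * b - c1) / (b - a)) • Measure.dirac a +
            ENNReal.ofReal ((c1 - c0 * a) / (b - a)) • Measure.dirac b) :=
  convex_moment_max_general a b hab g2 hg2c hg2conv c0 hc0 c1
end
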